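/- Let f : ℝ → ℝ be the piecewise linear map defined by f(x) = 1/10 − (2/5)x on [−1, −1/4], f(x) = −(4/5)x on [−1/4, 0], f(x) = 0 on [0, 1/5], f(x) = 3/8 − (15/8)x on [1/5, 1/3], and f(x) = (7/2)x − 17/12 on [1/3, 1/2]. Then f is continuous on [−1, 1/2], 0 is a fixed point, and the orbit of −1 satisfies f(−1) = 1/2, f(1/2) = 1/3, f(1/3) = −1/4, f(−1/4) = 1/5, f(1/5) = 0, so that −1 has orbit pattern tag RLLRL. -/
import Mathlib


/-- The alphabet of orbit pattern tags: `L` for a leftward move, `R` for a rightward move. -/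
inductive Letter : Type
  | L : Letter
  | R : Letter
deriving DecidableEq

open Letter

/-- A continuous interval map `f` admits the orbit pattern tag `w` if there is an
eventually fixed orbit `x 0, x 1, ..., x w.length` of `f` (the last point being fixed,
all earlier points different from it) whose `j`-th move is labelled by the `j`-th
letter of `w`: `L` if the orbit moves left, `R` if it moves right. -/
def Admits (f : ℝ → ℝ) (w : List Letter) : Prop :=
  ∃ x : ℕ → ℝ,
    (∀ j < w.length, f (x j) = x (j + 1)) ∧
    f (x w.length) = x w.length ∧
    (∀ j < w.length, x j ≠ x w.length) ∧
    (∀ j : Fin w.length,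
      (w.get j = L ∧ x ((j : ℕ) + 1) < x (j : ℕ)) ∨
      (w.get j = R ∧ x (j : ℕ) < x ((j : ℕ) + 1)))

/-- One step of reduction on words: replace an adjacent `LL` by `L`, an adjacent `RR`
by `R`, or delete an adjacent `LR` or `RL`. -/
inductive Red : List Letter → List Letter → Prop
  | ll (v v' : List Letter) : Red (v ++ [L, L] ++ v') (v ++ [L] ++ v')
  | rr (v v' : List Letter) : Red (v ++ [R, R] ++ v') (v ++ [R] ++ v')
  | lr (v v' : List Letter) : Red (v ++ [L, R] ++ v') (v ++ v')
  | rl (v v' : List Letter) : Red (v ++ [R, L] ++ v') (v ++ v')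

/-- One derivation step: a reduction, or tail formation (passing to a suffix). -/
inductive Step : List Letter → List Letter → Prop
  | red {w u : List Letter} : Red w u → Step w u
  | tail {w u : List Letter} : u <:+ w → Step w u

/-- `u` is obtained from `w` by finitely many reductions. -/
def Reducible : List Letter → List Letter → Prop := Relation.ReflTransGen Red

/-- `u` is derivable from `w`: finitely many reductions and tail formations, in any order. -/
def Derivable : List Letter → List Letter → Prop := Relation.ReflTransGen Step

/-- the explicit piecewise linear map admitting the tag RLLRL. -/
theorem stmt16 (f : ℝ → ℝ)
    (hf : ∀ x : ℝ, f x =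
      if x ≤ -(1/4) then 1/10 - (2/5) * x
      else if x ≤ 0 then -(4/5) * x
      else if x ≤ 1/5 then 0
      else if x ≤ 1/3 then 3/8 - (15/8) * x
      else (7/2) * x - 17/12) :
    ContinuousOn f (Set.Icc (-1 : ℝ) (1/2)) ∧ f 0 = 0 ∧
    f (-1) = 1/2 ∧ f (1/2) = 1/3 ∧ f (1/3) = -(1/4) ∧ f (-(1/4)) = 1/5 ∧ f (1/5) = 0 ∧
    Admits f [Letter.R, Letter.L, Letter.L, Letter.R, Letter.L] := by
  
  have hcont : Continuous f := by
    have : f = fun x : ℝ =>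
      if x ≤ -(1/4) then 1/10 - (2/5) * x
      else if x ≤ 0 then -(4/5) * x
      else if x ≤ 1/5 then 0
      else if x ≤ 1/3 then 3/8 - (15/8) * x
      else (7/2) * x - 17/12 := funext hf
    rw [this]
    apply Continuous.if_le (by fun_prop) ?_ continuous_id continuous_const
      (by intro x hx; (try simp only [id_eq] at hx); subst hx; norm_num)
    apply Continuous.if_le (by fun_prop) ?_ continuous_id continuous_const
      (by intro x hx; (try simp only [id_eq] at hx); subst hx; norm_num)
    apply Continuous.if_le (by fun_prop) ?_ continuous_id continuous_const
      (by intro x hx; (try simp only [id_eq] at hx); subst hx; norm_num)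
    exact Continuous.if_le (by fun_prop) (by fun_prop) continuous_id continuous_const
      (by intro x hx; (try simp only [id_eq] at hx); subst hx; norm_num)
  have h0 : f 0 = 0 := by rw [hf]; norm_num
  have h1 : f (-1) = 1/2 := by rw [hf]; norm_num
  have h2 : f (1/2) = 1/3 := by rw [hf]; norm_num
  have h3 : f (1/3) = -(1/4) := by rw [hf]; norm_num
  have h4 : f (-(1/4)) = 1/5 := by rw [hf]; norm_num
  have h5 : f (1/5) = 0 := by rw [hf]; norm_num
  refine ⟨hcont.continuousOn, h0, h1, h2, h3, h4, h5, ?_⟩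
  refine ⟨fun j => match j with
    | 0 => -1 | 1 => 1/2 | 2 => 1/3 | 3 => -(1/4) | 4 => 1/5 | _ => 0, ?_, ?_, ?_, ?_⟩
  · intro j hj
    simp only [List.length_cons, List.length_nil] at hj
    interval_cases j
    · exact h1
    · exact h2
    · exact h3
    · exact h4
    · exact h5
  · exact h0
  · intro j hj
    simp only [List.length_cons, List.length_nil] at hj
    interval_cases j <;> norm_num
  · intro j
    fin_cases j
    · exact Or.inr ⟨rfl, by norm_num⟩
    · exact Or.inl ⟨rfl, by norm_num⟩
    · exact Or.inl ⟨rfl, by norm_num⟩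
    · exact Or.inr ⟨rfl, by norm_num⟩
    · exact Or.inl ⟨rfl, by norm_num⟩
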